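/- arXiv:1604.05836 — 8 statements merged into one kernel-verified Lean document; each statement's English description precedes it below -/
import Mathlib

section
/- Let S be a nondegenerate hyperbolic integral lattice (signature (1, rank−1)) with a distinguished vector h of square 4, containing no vector e with e² = −2 and e·h = 0, and no vector e with e² = 0 and e·h = 2. Then for any two distinct vectors a₁, a₂ ∈ S with a₁² = a₂² = −2 and a₁·h = a₂·h = 1, one has a₁·a₂ = 0 or a₁·a₂ = 1. -/
/-- A (4-polarized context) integral lattice is *hyperbolic* if its bilinear form is
nondegenerate, represents a positive value, and admits no positive definite plane
(i.e. σ₊ = 1). -/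
def IsHyperbolicLattice {S : Type*} [AddCommGroup S] [Module ℤ S]
    (B : S →ₗ[ℤ] S →ₗ[ℤ] ℤ) : Prop :=
  (∀ x : S, (∀ y : S, B x y = 0) → x = 0) ∧
  (∃ v : S, 0 < B v v) ∧
  ¬ ∃ v w : S, ∀ a b : ℤ, ¬(a = 0 ∧ b = 0) →
      0 < B (a • v + b • w) (a • v + b • w)

/-- in an admissible hyperbolic 4-polarized lattice, two distinct lines
have intersection number 0 or 1. -/
theorem lines_pairing_zero_or_one {S : Type*} [AddCommGroup S] [Module ℤ S]
    [Module.Free ℤ S] [Module.Finite ℤ S]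
    (B : S →ₗ[ℤ] S →ₗ[ℤ] ℤ) (hsymm : ∀ x y, B x y = B y x)
    (hhyp : IsHyperbolicLattice B)
    (h : S) (hh : B h h = 4)
    (hexc : ¬ ∃ e : S, B e e = -2 ∧ B e h = 0)
    (hdbl : ¬ ∃ e : S, B e e = 0 ∧ B e h = 2)
    (a₁ a₂ : S) (ha₁ : B a₁ a₁ = -2) (ha₂ : B a₂ a₂ = -2)
    (ha₁h : B a₁ h = 1) (ha₂h : B a₂ h = 1) (hne : a₁ ≠ a₂) :
    B a₁ a₂ = 0 ∨ B a₁ a₂ = 1 := by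
  obtain ⟨hnd, -, hpl⟩ := hhyp
  have hhyp : (∀ x : S, (∀ y : S, B x y = 0) → x = 0) ∧
      (∃ v : S, 0 < B v v) ∧
      ¬ ∃ v w : S, ∀ a b : ℤ, ¬(a = 0 ∧ b = 0) →
        0 < B (a • v + b • w) (a • v + b • w) := ⟨hnd, ⟨h, by rw [hh]; norm_num⟩, hpl⟩
  -- every vector orthogonal to h has nonpositive square
  have key : ∀ y : S, B y h = 0 → B y y ≤ 0 := by
    intro y hy
    by_contra hpos
    push_neg at hpos
    apply hhyp.2.2
    refine ⟨h, y, fun a b hab => ?_⟩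
    have hhy : B h y = 0 := (hsymm h y).trans hy
    have hex : B (a • h + b • y) (a • h + b • y)
        = a * a * 4 + b * b * B y y := by
      simp [map_add, map_smul, smul_eq_mul, hh, hy, hhy]
      ring
    rw [hex]
    have hab' : a ≠ 0 ∨ b ≠ 0 := by tauto
    rcases hab' with ha | hb
    · have : 1 ≤ a * a := by nlinarith [Int.one_le_abs ha, abs_nonneg a, sq_abs a]
      nlinarith [mul_self_nonneg b]
    · have : 1 ≤ b * b := by nlinarith [Int.one_le_abs hb, abs_nonneg b, sq_abs b]
      nlinarith [mul_self_nonneg a]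
  set t := B a₁ a₂ with ht
  have hsym21 : B a₂ a₁ = t := hsymm a₂ a₁
  have hha1 : B h a₁ = 1 := (hsymm h a₁).trans ha₁h
  have hha2 : B h a₂ = 1 := (hsymm h a₂).trans ha₂h
  -- lower bound : t ≥ -2
  have hd_h : B (a₁ - a₂) h = 0 := by
    simp [map_sub, ha₁h, ha₂h]
  have hd_sq : B (a₁ - a₂) (a₁ - a₂) = -4 - 2 * t := by
    simp [map_sub, ha₁, ha₂, hsym21, ← ht]
    ring
  have hlow : -2 ≤ t := by have := key _ hd_h; rw [hd_sq] at this; linarith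
  -- upper bound: t ≤ 2
  have hu_h : B ((2:ℤ) • a₁ + (2:ℤ) • a₂ - h) h = 0 := by
    simp [map_sub, map_add, map_smul, ha₁h, ha₂h, hh]
  have hu_sq : B ((2:ℤ) • a₁ + (2:ℤ) • a₂ - h) ((2:ℤ) • a₁ + (2:ℤ) • a₂ - h)
      = 8 * t - 20 := by
    simp [map_sub, map_add, map_smul, smul_eq_mul, ha₁, ha₂, ha₁h, ha₂h, hha1, hha2,
      hsym21, ← ht, hh]
    ring
  have hup : t ≤ 2 := by have := key _ hu_h; rw [hu_sq] at this; omega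
  -- exclude t = -1
  have hne1 : t ≠ -1 := by
    intro h1
    exact hexc ⟨a₁ - a₂, by rw [hd_sq, h1]; ring, hd_h⟩
  -- exclude t = 2
  have hne2 : t ≠ 2 := by
    intro h2
    refine hdbl ⟨h - a₁ - a₂, ?_, ?_⟩
    · simp [map_sub, hh, ha₁, ha₂, ha₁h, ha₂h, hha1, hha2, hsym21, ← ht, h2]
    · simp [map_sub, hh, ha₁h, ha₂h]
  -- exclude t = -2
  have hnem2 : t ≠ -2 := by
    intro hm2
    apply hne
    rw [← sub_eq_zero]
    apply hhyp.1
    intro x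
    set e := a₁ - a₂ with he
    have he_sq : B e e = 0 := by rw [hd_sq, hm2]; ring
    set y := (4:ℤ) • x - (B x h) • h with hy
    have hyh : B y h = 0 := by
      simp [hy, map_sub, map_smul, smul_eq_mul, hh]; ring
    have hyy : B y y ≤ 0 := key y hyh
    have hey4 : B e y = 4 * B e x := by
      simp [hy, map_sub, map_smul, smul_eq_mul, hd_h]
    have hey : B e y = 0 := by
      by_contra hne0
      obtain ⟨u, hu⟩ : ∃ u, B y y = u := ⟨_, rfl⟩
      obtain ⟨v, hv⟩ : ∃ v, B e y = v := ⟨_, rfl⟩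
      have hzh : B (y + (v * (1 - u)) • e) h = 0 := by
        simp [map_add, map_smul, smul_eq_mul, hyh, hd_h, ← he]
      have hzz := key _ hzh
      have hexp : B (y + (v * (1 - u)) • e) (y + (v * (1 - u)) • e)
          = u + 2 * (v * (1 - u)) * v := by
        have hye : B y e = v := (hsymm y e).trans hv
        simp [map_add, map_smul, smul_eq_mul, he_sq, hye, hu, hv]
        ring
      rw [hexp] at hzz
      have hv0 : v ≠ 0 := hv ▸ hne0
      have h1 : 1 ≤ v * v := by
        nlinarith [Int.one_le_abs hv0, abs_nonneg v, sq_abs v]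
      have hu0 : u ≤ 0 := hu ▸ hyy
      have hkey : 0 ≤ (v * v - 1) * (1 - u) :=
        mul_nonneg (by linarith) (by linarith)
      have hkey' : 0 ≤ v * v - u * (v * v) - 1 + u := by linear_combination hkey
      have hzz' : u + 2 * (v * v) - 2 * (u * (v * v)) ≤ 0 := by linear_combination hzz
      linarith
    have : (4:ℤ) * B e x = 0 := by rw [← hey4, hey]
    linarith
  omega
end

section
/- Let S be a hyperbolic integral lattice with polarization h, h² = 4, and let a₁, a₂, a₃, a₄ ∈ S satisfy aᵢ² = −2, aᵢ·h = 1 for all i, and aᵢ·aⱼ = 1 for all i ≠ j. Then a₁ + a₂ + a₃ + a₄ = h. -/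
lemma plane_aux (c q : ℤ) (hc : c ≠ 0) (hq : q ≤ 0)
    (key : ∀ t : ℤ, q + 2 * t * c ≤ 0) : False := by
  have hc2 : 1 ≤ c ^ 2 := by
    nlinarith [Int.one_le_abs hc, abs_nonneg c, sq_abs c]
  nlinarith [key (c * (1 - q))]

/-- four pairwise intersecting lines in a hyperbolic 4-polarized lattice
sum up to the polarization (they form a *plane*). -/
theorem plane_relation {S : Type*} [AddCommGroup S] [Module ℤ S]
    [Module.Free ℤ S] [Module.Finite ℤ S]
    (B : S →ₗ[ℤ] S →ₗ[ℤ] ℤ) (hsymm : ∀ x y, B x y = B y x)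
    (hhyp : IsHyperbolicLattice B)
    (h : S) (hh : B h h = 4)
    (a : Fin 4 → S)
    (hsq : ∀ i, B (a i) (a i) = -2)
    (hah : ∀ i, B (a i) h = 1)
    (hint : ∀ i j, i ≠ j → B (a i) (a j) = 1) :
    a 0 + a 1 + a 2 + a 3 = h := by
  obtain ⟨hnd, -, hnp⟩ := hhyp
  set v := a 0 + a 1 + a 2 + a 3 - h with hv
  have hha : ∀ i, B h (a i) = 1 := fun i => (hsymm _ _).trans (hah i)
  have e01 : B (a 0) (a 1) = 1 := hint _ _ (by decide)
  have e02 : B (a 0) (a 2) = 1 := hint _ _ (by decide)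
  have e03 : B (a 0) (a 3) = 1 := hint _ _ (by decide)
  have e10 : B (a 1) (a 0) = 1 := hint _ _ (by decide)
  have e12 : B (a 1) (a 2) = 1 := hint _ _ (by decide)
  have e13 : B (a 1) (a 3) = 1 := hint _ _ (by decide)
  have e20 : B (a 2) (a 0) = 1 := hint _ _ (by decide)
  have e21 : B (a 2) (a 1) = 1 := hint _ _ (by decide)
  have e23 : B (a 2) (a 3) = 1 := hint _ _ (by decide)
  have e30 : B (a 3) (a 0) = 1 := hint _ _ (by decide)
  have e31 : B (a 3) (a 1) = 1 := hint _ _ (by decide)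
  have e32 : B (a 3) (a 2) = 1 := hint _ _ (by decide)
  have hvh : B v h = 0 := by
    simp [hv, map_add, map_sub, LinearMap.add_apply, LinearMap.sub_apply, hah, hh]
  have hvv : B v v = 0 := by
    simp [hv, map_add, map_sub, LinearMap.add_apply, LinearMap.sub_apply,
      hsq, hah, hha, hh, e01, e02, e03, e10, e12, e13, e20, e21, e23, e30, e31, e32]
  -- h⊥ is negative semidefinite
  have hneg : ∀ w, B w h = 0 → B w w ≤ 0 := by
    intro w hw
    by_contra hpos
    push_neg at hpos
    refine hnp ⟨h, w, fun p q hpq => ?_⟩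
    have hhw : B h w = 0 := (hsymm _ _).trans hw
    have hval : B (p • h + q • w) (p • h + q • w) = 4 * p ^ 2 + (B w w) * q ^ 2 := by
      simp [map_add, map_smul, smul_eq_mul, hh, hw, hhw]
      ring
    rw [hval]
    rcases Classical.em (p = 0) with hp | hp
    · have hq : q ≠ 0 := fun hq => hpq ⟨hp, hq⟩
      have h1 : 1 ≤ q ^ 2 := by nlinarith [Int.one_le_abs hq, sq_nonneg q, abs_nonneg q, sq_abs q]
      nlinarith [sq_nonneg p]
    · have h1 : 1 ≤ p ^ 2 := by nlinarith [Int.one_le_abs hp, abs_nonneg p, sq_abs p]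
      nlinarith [sq_nonneg q]
  -- v is orthogonal to h⊥
  have hvw : ∀ w, B w h = 0 → B w v = 0 := by
    intro w hw
    by_contra hc
    have hwv : B v w = B w v := hsymm _ _
    have key : ∀ t : ℤ, B w w + 2 * t * (B w v) ≤ 0 := by
      intro t
      have horth : B (w + t • v) h = 0 := by
        simp [map_add, map_smul, smul_eq_mul, hw, hvh]
      have := hneg _ horth
      have hexp : B (w + t • v) (w + t • v) = B w w + 2 * t * (B w v) := by
        simp [map_add, map_smul, smul_eq_mul, hvv, hwv]
        ring
      linarith [hexp ▸ this]
    exact plane_aux (B w v) (B w w) hc (hneg w hw) key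
  -- v is orthogonal to everything
  have hvx : ∀ y : S, B v y = 0 := by
    intro x
    have hw : B ((4 : ℤ) • x - (B x h) • h) h = 0 := by
      simp [map_sub, map_smul, LinearMap.sub_apply, smul_eq_mul, hh]
      ring
    have := hvw _ hw
    have hexp : B ((4 : ℤ) • x - (B x h) • h) v = 4 * B x v - (B x h) * (B h v) := by
      simp [map_sub, map_smul, LinearMap.sub_apply, smul_eq_mul]
    have hhv : B h v = 0 := (hsymm _ _).trans hvh
    rw [hexp, hhv] at this
    have hxv : B x v = 0 := by linarith
    calc B v x = B x v := hsymm _ _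
    _ = 0 := hxv
  have : v = 0 := hnd v hvx
  have := sub_eq_zero.mp this
  exact this
end

section
/- Let S be a hyperbolic integral lattice with polarization h, h² = 4, and suppose vectors a₁,…,a₄, b₁,…,b₄ ∈ S satisfy aᵢ² = bᵢ² = −2, aᵢ·h = bᵢ·h = 1 for all i, aᵢ·aⱼ = bᵢ·bⱼ = 0 for i ≠ j, and aᵢ·bⱼ = 1 for all i, j. Then a₁ + a₂ + a₃ + a₄ + b₁ + b₂ + b₃ + b₄ = 2h. -/
/-- An isotropic vector orthogonal to a vector of positive square in a
hyperbolic lattice is zero. -/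
lemma iso_orth_zero {S : Type*} [AddCommGroup S] [Module ℤ S]
    (B : S →ₗ[ℤ] S →ₗ[ℤ] ℤ) (hsymm : ∀ x y, B x y = B y x)
    (hhyp : IsHyperbolicLattice B)
    (h v : S) (hh : B h h = 4) (hvv : B v v = 0) (hvh : B v h = 0) : v = 0 := by
  by_contra hv
  obtain ⟨hnd, -, hnp⟩ := hhyp
  have hy : ∃ y, B v y ≠ 0 := by
    by_contra hcon; push_neg at hcon; exact hv (hnd v hcon)
  obtain ⟨y, hc⟩ := hy
  obtain ⟨c, hcdef⟩ : ∃ c, B v y = c := ⟨_, rfl⟩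
  obtain ⟨m, hmdef⟩ : ∃ m, B h y = m := ⟨_, rfl⟩
  obtain ⟨q, hqdef⟩ : ∃ q, B y y = q := ⟨_, rfl⟩
  rw [hcdef] at hc
  set N : ℤ := c * (m ^ 2 + q ^ 2 + 1) with hNdef
  set z := N • v + y with hzdef
  have hhv : B h v = 0 := (hsymm h v).trans hvh
  have hyv : B y v = c := (hsymm y v).trans hcdef
  have hBhz : B h z = m := by
    simp [hzdef, map_add, map_smul, hhv, hmdef, smul_eq_mul]
  have hBzh : B z h = m := (hsymm z h).trans hBhz
  have hBzz : B z z = 2 * N * c + q := by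
    simp only [hzdef, map_add, map_smul, LinearMap.map_smul_of_tower, LinearMap.add_apply,
      LinearMap.smul_apply, smul_eq_mul, hvv, hyv, hcdef, hqdef]
    ring
  have hc2 : 1 ≤ c ^ 2 := by
    have h1 : 1 ≤ |c| := Int.one_le_abs hc
    nlinarith [sq_abs c]
  apply hnp
  refine ⟨h, z, fun A b hab0 => ?_⟩
  have expand : B (A • h + b • z) (A • h + b • z)
      = A * A * 4 + 2 * A * b * m + b * b * (2 * N * c + q) := by
    simp only [map_add, map_smul, LinearMap.map_smul_of_tower, LinearMap.add_apply,
      LinearMap.smul_apply, smul_eq_mul, hh, hBhz, hBzh, hBzz]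
    ring
  rw [expand, hNdef]
  rcases eq_or_ne b 0 with hb | hb
  · subst hb
    have hA : A ≠ 0 := by tauto
    have hA2 : 1 ≤ A ^ 2 := by
      have h1 : 1 ≤ |A| := Int.one_le_abs hA
      nlinarith [sq_abs A]
    nlinarith
  · have hb2 : 1 ≤ b ^ 2 := by
      have h1 : 1 ≤ |b| := Int.one_le_abs hb
      nlinarith [sq_abs b]
    nlinarith [sq_nonneg (2 * A + b * m), sq_nonneg ((2 * q + 1) * b), sq_nonneg (m * b),
      sq_nonneg (q * b), hb2,
      mul_le_mul_of_nonneg_right hc2 (by positivity : (0:ℤ) ≤ (m ^ 2 + q ^ 2 + 1) * b ^ 2)]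

/-- eight lines forming the complete bipartite graph `K₄,₄` in a
hyperbolic 4-polarized lattice sum up to twice the polarization. -/
theorem K44_relation {S : Type*} [AddCommGroup S] [Module ℤ S]
    [Module.Free ℤ S] [Module.Finite ℤ S]
    (B : S →ₗ[ℤ] S →ₗ[ℤ] ℤ) (hsymm : ∀ x y, B x y = B y x)
    (hhyp : IsHyperbolicLattice B)
    (h : S) (hh : B h h = 4)
    (a b : Fin 4 → S)
    (hsqa : ∀ i, B (a i) (a i) = -2) (hsqb : ∀ i, B (b i) (b i) = -2)
    (hah : ∀ i, B (a i) h = 1) (hbh : ∀ i, B (b i) h = 1)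
    (haa : ∀ i j, i ≠ j → B (a i) (a j) = 0)
    (hbb : ∀ i j, i ≠ j → B (b i) (b j) = 0)
    (hab : ∀ i j, B (a i) (b j) = 1) :
    (∑ i : Fin 4, a i) + ∑ i : Fin 4, b i = (2 : ℤ) • h := by
  have hba : ∀ i j, B (b i) (a j) = 1 := fun i j => (hsymm _ _).trans (hab j i)
  have hha : ∀ i, B h (a i) = 1 := fun i => (hsymm _ _).trans (hah i)
  have hhb : ∀ i, B h (b i) = 1 := fun i => (hsymm _ _).trans (hbh i)
  set v : S := ((∑ i : Fin 4, a i) + ∑ i : Fin 4, b i) - (2 : ℤ) • h with hvdef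
  have hvh : B v h = 0 := by
    simp [hvdef, Fin.sum_univ_four, map_add, map_sub, LinearMap.map_smul_of_tower,
      LinearMap.add_apply, LinearMap.sub_apply, LinearMap.smul_apply,
      smul_eq_mul, hah, hbh, hh]
  have hva : ∀ i, B v (a i) = 0 := by
    intro i
    simp only [hvdef, map_sub, map_add, map_sum, LinearMap.map_smul_of_tower,
      LinearMap.sub_apply, LinearMap.add_apply, LinearMap.sum_apply,
      LinearMap.smul_apply, smul_eq_mul]
    rw [Finset.sum_eq_single i (fun j _ hj => haa j i hj) (by simp)]
    simp [hsqa, hba, hha, Fin.sum_univ_four]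
  have hvb : ∀ i, B v (b i) = 0 := by
    intro i
    simp only [hvdef, map_sub, map_add, map_sum, LinearMap.map_smul_of_tower,
      LinearMap.sub_apply, LinearMap.add_apply, LinearMap.sum_apply,
      LinearMap.smul_apply, smul_eq_mul]
    rw [Finset.sum_eq_single i (fun j _ hj => hbb j i hj) (by simp)]
    simp [hsqb, hab, hhb, Fin.sum_univ_four]
  have hvv : B v v = 0 := by
    conv_lhs => rw [show ((B v) v) = B v (((∑ i : Fin 4, a i) + ∑ i : Fin 4, b i) - (2 : ℤ) • h) from rfl]
    simp [Fin.sum_univ_four, map_add, map_sub, map_smul, hva, hvb, hvh]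
  have hv0 : v = 0 := iso_orth_zero B hsymm hhyp h v hh hvv hvh
  rw [hvdef] at hv0
  exact sub_eq_zero.mp hv0
end

section
/- Let S be a hyperbolic integral lattice with polarization h, h² = 4, and suppose vectors a₁,…,a₁₀, b₁, b₂ ∈ S satisfy aᵢ² = bⱼ² = −2, aᵢ·h = bⱼ·h = 1, aᵢ·aⱼ = 0 for i ≠ j, b₁·b₂ = 0, and aᵢ·bⱼ = 1 for all i = 1,…,10 and j = 1,2. Then a₁ + a₂ + ⋯ + a₁₀ + 3b₁ + 3b₂ = 4h. -/
private lemma K102_aux1 (d c : ℤ) (hd : d ≠ 0) : 0 < 2 * (d * d) * (|c| + 1) + c := by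
  have h1 : 1 ≤ d * d := by
    nlinarith [Int.one_le_abs hd, abs_mul_abs_self d, abs_nonneg d]
  have h2 : -c ≤ |c| := neg_le_abs c
  have h3 : (0:ℤ) ≤ |c| + 1 := by positivity
  nlinarith [mul_nonneg (sub_nonneg.mpr h1) h3]

private lemma K102_aux2 (p q m : ℤ) (hm : 0 < m) (hpq : ¬(p = 0 ∧ q = 0)) :
    0 < p * p * 4 + q * q * m := by
  rcases eq_or_ne p 0 with hp | hp
  · have hq : q ≠ 0 := fun hq => hpq ⟨hp, hq⟩
    have h1 : 0 < q * q := mul_self_pos.mpr hq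
    nlinarith [mul_pos h1 hm]
  · have h1 : 1 ≤ p * p := by
      nlinarith [Int.one_le_abs hp, abs_mul_abs_self p, abs_nonneg p]
    have h2 : 0 ≤ q * q * m := mul_nonneg (mul_self_nonneg q) hm.le
    linarith

/-- twelve lines forming the complete bipartite graph `K₁₀,₂` in a
hyperbolic 4-polarized lattice satisfy `a₁ + ⋯ + a₁₀ + 3b₁ + 3b₂ = 4h`. -/
theorem K102_relation {S : Type*} [AddCommGroup S] [Module ℤ S]
    [Module.Free ℤ S] [Module.Finite ℤ S]
    (B : S →ₗ[ℤ] S →ₗ[ℤ] ℤ) (hsymm : ∀ x y, B x y = B y x)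
    (hhyp : IsHyperbolicLattice B)
    (h : S) (hh : B h h = 4)
    (a : Fin 10 → S) (b : Fin 2 → S)
    (hsqa : ∀ i, B (a i) (a i) = -2) (hsqb : ∀ j, B (b j) (b j) = -2)
    (hah : ∀ i, B (a i) h = 1) (hbh : ∀ j, B (b j) h = 1)
    (haa : ∀ i j, i ≠ j → B (a i) (a j) = 0)
    (hbb : B (b 0) (b 1) = 0)
    (hab : ∀ i j, B (a i) (b j) = 1) :
    (∑ i : Fin 10, a i) + (3 : ℤ) • b 0 + (3 : ℤ) • b 1 = (4 : ℤ) • h := by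
  classical
  obtain ⟨hnd, -, hnoplane⟩ := hhyp
  set A : S := ∑ i : Fin 10, a i with hA
  set v : S := A + (3 : ℤ) • b 0 + (3 : ℤ) • b 1 - (4 : ℤ) • h with hvdef
  -- expansion of B v y
  have key : ∀ y, B v y = B A y + 3 * B (b 0) y + 3 * B (b 1) y - 4 * B h y := by
    intro y
    simp [hvdef, map_add, map_sub, map_smul, LinearMap.add_apply, LinearMap.sub_apply,
      LinearMap.smul_apply, smul_eq_mul]
  have hAy : ∀ y, B A y = ∑ i : Fin 10, B (a i) y := by
    intro y
    simp [hA, map_sum, LinearMap.sum_apply]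
  have hAh : B A h = 10 := by
    rw [hAy]; simp [hah]
  have hAb : ∀ j, B A (b j) = 10 := by
    intro j; rw [hAy]; simp [hab]
  have hAA : B A A = -20 := by
    rw [hAy]
    have : ∀ i : Fin 10, B (a i) A = -2 := by
      intro i
      have : B (a i) A = ∑ j : Fin 10, B (a i) (a j) := by simp [hA, map_sum]
      rw [this, Finset.sum_eq_single i]
      · exact hsqa i
      · intro j _ hj; exact haa i j (Ne.symm hj)
      · simp
    simp [this]
  have hbA : ∀ j, B (b j) A = 10 := by
    intro j; rw [hsymm, hAb]
  have hhA : B h A = 10 := by rw [hsymm, hAh]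
  have hhb : ∀ j, B h (b j) = 1 := by intro j; rw [hsymm, hbh]
  have hb10 : B (b 1) (b 0) = 0 := by rw [hsymm, hbb]
  -- B v h = 0 and B v v = 0
  have hvh : B v h = 0 := by
    rw [key, hAh, hbh, hbh, hh]; ring
  have hvv : B v v = 0 := by
    have h1 : B v A = 0 := by
      rw [key, hAA, hbA, hbA, hhA]; ring
    have h2 : B v (b 0) = 0 := by
      rw [key, hAb, hsqb, hb10, hhb]; ring
    have h3 : B v (b 1) = 0 := by
      rw [key, hAb, hbb, hsqb, hhb]; ring
    have : B v v = B v A + 3 * B v (b 0) + 3 * B v (b 1) - 4 * B v h := by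
      nth_rewrite 2 [hvdef]
      simp [map_add, map_sub, map_smul, smul_eq_mul]
    rw [this, h1, h2, h3, hvh]; ring
  -- show v = 0
  have hv0 : v = 0 := by
    by_contra hne
    have hex : ∃ w, B v w ≠ 0 := by
      by_contra hall
      push_neg at hall
      exact hne (hnd v hall)
    obtain ⟨w, hw⟩ := hex
    -- project w to h-perp
    set u : S := (4 : ℤ) • w - (B w h) • h with hu
    have huh : B u h = 0 := by
      simp [hu, map_sub, map_smul, LinearMap.sub_apply, LinearMap.smul_apply, smul_eq_mul, hh]
      ring
    have hvu : B v u = 4 * B v w := by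
      simp [hu, map_sub, map_smul, smul_eq_mul, hvh]
    have hvu0 : B v u ≠ 0 := by
      rw [hvu]
      exact mul_ne_zero (by norm_num) hw
    set d : ℤ := B v u with hd
    set x : S := (d * (|B u u| + 1)) • v + u with hx
    have hxh : B x h = 0 := by
      simp [hx, map_add, map_smul, LinearMap.add_apply, LinearMap.smul_apply, smul_eq_mul,
        hvh, huh]
    have hxx : 0 < B x x := by
      have hx2 : ∀ z : S, B z x = (d * (|B u u| + 1)) * B z v + B z u := by
        intro z
        rw [hx]
        simp [map_add, map_smul, smul_eq_mul]
      have huv : B u v = d := by rw [hsymm]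
      have e : B x x = 2 * (d * d) * (|B u u| + 1) + B u u := by
        rw [hx2 x, hsymm x v, hx2 v, hsymm x u, hx2 u, hvv, huv, ← hd]; ring
      rw [e]
      exact K102_aux1 d (B u u) hvu0
    apply hnoplane
    refine ⟨h, x, ?_⟩
    intro p q hpq
    have e : B (p • h + q • x) (p • h + q • x) = p * p * 4 + q * q * B x x := by
      have hhx : B h x = 0 := by rw [hsymm]; exact hxh
      have hy2 : ∀ z : S, B z (p • h + q • x) = p * B z h + q * B z x := by
        intro z; simp [map_add, map_smul, smul_eq_mul]
      rw [hy2 (p • h + q • x), hsymm (p • h + q • x) h, hy2 h,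
        hsymm (p • h + q • x) x, hy2 x, hh, hxh, hhx]; ring
    rw [e]
    exact K102_aux2 p q (B x x) hxx hpq
  rw [hvdef] at hv0
  exact sub_eq_zero.mp hv0
end

section
/- Let S be a hyperbolic integral lattice with polarization h, h² = 4, and suppose vectors a, b, a₁,…,a₆, b₁,…,b₆ ∈ S are lines (square −2, dot product 1 with h) such that a·b = 0, a·bᵢ = 0, aᵢ·b = 0, aᵢ·aⱼ = 0 and bᵢ·bⱼ = 0 for i ≠ j, while a·aᵢ = 1, b·bᵢ = 1, and aᵢ·bᵢ = 1 for all i, and aᵢ·bⱼ = 0 for i ≠ j. Then 3a + a₁ + ⋯ + a₆ = 3b + b₁ + ⋯ + b₆. -/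
/-- If `x` is isotropic, orthogonal to `h` with `B h h = 4`, and pairs nontrivially
with some `y`, then there is a positive definite plane. -/
lemma pos_plane_of_isotropic {S : Type*} [AddCommGroup S] [Module ℤ S]
    (B : S →ₗ[ℤ] S →ₗ[ℤ] ℤ) (hsymm : ∀ x y, B x y = B y x)
    (h x y : S) (hh : B h h = 4) (hxh : B x h = 0) (hxx : B x x = 0)
    (hy : B x y ≠ 0) :
    ∃ v w : S, ∀ p q : ℤ, ¬(p = 0 ∧ q = 0) →
      0 < B (p • v + q • w) (p • v + q • w) := by
  set c : ℤ := B x y with hc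
  set e : ℤ := B h y with he
  set f : ℤ := B y y with hf
  set M : ℤ := (|f| + e ^ 2 + 1) * c with hM
  refine ⟨h, M • x + y, ?_⟩
  have hhx : B h x = 0 := (hsymm h x).trans hxh
  have hyx : B y x = c := (hsymm y x).trans hc.symm
  have hyh : B y h = e := (hsymm y h).trans he.symm
  have key : ∀ p q : ℤ, B (p • h + q • (M • x + y)) (p • h + q • (M • x + y)) =
      4 * p ^ 2 + 2 * p * q * e + q ^ 2 * (2 * M * c + f) := by
    intro p q
    simp only [map_add, map_zsmul, LinearMap.add_apply, LinearMap.smul_apply,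
      smul_eq_mul, hh, hxh, hhx, hxx, hyx, hyh, ← he, ← hc, ← hf]
    ring
  have hc2 : 1 ≤ c ^ 2 := by
    rcases hy.lt_or_gt with h1 | h1 <;> nlinarith
  have hD : 0 < 8 * (M * c) + 4 * f - e ^ 2 := by
    have h1 : f ≤ |f| := le_abs_self f
    have h2 : -|f| ≤ f := neg_abs_le f
    have hMc : M * c = (|f| + e ^ 2 + 1) * c ^ 2 := by rw [hM]; ring
    nlinarith [sq_nonneg e, abs_nonneg f]
  intro p q hpq
  rw [key p q]
  rcases eq_or_ne q 0 with hq | hq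
  · have hp : p ≠ 0 := fun hp => hpq ⟨hp, hq⟩
    have : 1 ≤ p ^ 2 := by
      rcases hp.lt_or_gt with h1 | h1 <;> nlinarith
    subst hq
    nlinarith
  · have hq2 : 1 ≤ q ^ 2 := by
      rcases hq.lt_or_gt with h1 | h1 <;> nlinarith
    nlinarith [sq_nonneg (4 * p + q * e)]

/-- fourteen lines intersecting as in Figure 3 (two stars matched along
their rays) satisfy `3a + a₁ + ⋯ + a₆ = 3b + b₁ + ⋯ + b₆`. -/
theorem star_relation {S : Type*} [AddCommGroup S] [Module ℤ S]
    [Module.Free ℤ S] [Module.Finite ℤ S]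
    (B : S →ₗ[ℤ] S →ₗ[ℤ] ℤ) (hsymm : ∀ x y, B x y = B y x)
    (hhyp : IsHyperbolicLattice B)
    (h : S) (hh : B h h = 4)
    (a b : S) (as bs : Fin 6 → S)
    (hsqa : B a a = -2) (hsqb : B b b = -2)
    (hsqas : ∀ i, B (as i) (as i) = -2) (hsqbs : ∀ i, B (bs i) (bs i) = -2)
    (hah : B a h = 1) (hbh : B b h = 1)
    (hash : ∀ i, B (as i) h = 1) (hbsh : ∀ i, B (bs i) h = 1)
    (hab : B a b = 0)
    (habs : ∀ i, B a (bs i) = 0) (hasb : ∀ i, B (as i) b = 0)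
    (hasas : ∀ i j, i ≠ j → B (as i) (as j) = 0)
    (hbsbs : ∀ i j, i ≠ j → B (bs i) (bs j) = 0)
    (haas : ∀ i, B a (as i) = 1) (hbbs : ∀ i, B b (bs i) = 1)
    (hasbs_diag : ∀ i, B (as i) (bs i) = 1)
    (hasbs_off : ∀ i j, i ≠ j → B (as i) (bs j) = 0) :
    (3 : ℤ) • a + ∑ i : Fin 6, as i = (3 : ℤ) • b + ∑ i : Fin 6, bs i := by
  obtain ⟨hnd, -, hnoplane⟩ := hhyp
  set x : S := ((3 : ℤ) • a + ∑ i : Fin 6, as i) - ((3 : ℤ) • b + ∑ i : Fin 6, bs i)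
    with hxdef
  -- symmetric versions of pairings
  have hsaa : ∀ i, B (as i) a = 1 := fun i => (hsymm _ _).trans (haas i)
  have hsbb : ∀ i, B (bs i) b = 1 := fun i => (hsymm _ _).trans (hbbs i)
  have hba : B b a = 0 := (hsymm _ _).trans hab
  have hbsa : ∀ i, B (bs i) a = 0 := fun i => (hsymm _ _).trans (habs i)
  have hbas : ∀ i, B b (as i) = 0 := fun i => (hsymm _ _).trans (hasb i)
  -- matrix-style pairings
  have hAA : ∀ i j : Fin 6, B (as i) (as j) = if i = j then -2 else 0 := by
    intro i j; by_cases hij : i = j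
    · simp [hij, hsqas]
    · simp [hij, hasas i j hij]
  have hBB : ∀ i j : Fin 6, B (bs i) (bs j) = if i = j then -2 else 0 := by
    intro i j; by_cases hij : i = j
    · simp [hij, hsqbs]
    · simp [hij, hbsbs i j hij]
  have hABm : ∀ i j : Fin 6, B (as i) (bs j) = if i = j then 1 else 0 := by
    intro i j; by_cases hij : i = j
    · simp [hij, hasbs_diag]
    · simp [hij, hasbs_off i j hij]
  have hBAm : ∀ i j : Fin 6, B (bs i) (as j) = if i = j then 1 else 0 := by
    intro i j; rw [hsymm, hABm j i]; by_cases hij : i = j <;> simp [hij, Ne.symm]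
  have hxx : B x x = 0 := by
    simp only [hxdef, map_add, map_sub, map_zsmul, map_sum, LinearMap.add_apply,
      LinearMap.sub_apply, LinearMap.smul_apply, LinearMap.sum_apply, smul_eq_mul,
      hsqa, hsqb, hab, hba, haas, hbbs, hsaa, hsbb, habs, hasb, hbsa, hbas,
      hAA, hBB, hABm, hBAm,
      Finset.sum_add_distrib, Finset.sum_sub_distrib, Finset.sum_ite_eq,
      Finset.sum_ite_eq', Finset.mem_univ, if_true, Finset.sum_const,
      Finset.card_univ, Fintype.card_fin, nsmul_eq_mul]
    ring
  have hxh : B x h = 0 := by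
    simp only [hxdef, map_add, map_sub, map_zsmul, map_sum, LinearMap.add_apply,
      LinearMap.sub_apply, LinearMap.smul_apply, LinearMap.sum_apply, smul_eq_mul,
      hah, hbh, hash, hbsh, Finset.sum_const, Finset.card_univ, Fintype.card_fin,
      nsmul_eq_mul]
    ring
  have hx0 : x = 0 := by
    by_contra hx
    have : ∃ y, B x y ≠ 0 := by
      by_contra hy
      push_neg at hy
      exact hx (hnd x hy)
    obtain ⟨y, hy⟩ := this
    exact hnoplane (pos_plane_of_isotropic B hsymm h x y hh hxh hxx hy)
  have := sub_eq_zero.mp hx0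
  exact this
end

section
/- Let V be a finite-dimensional F₃-vector space with a quadratic form q : V → F₃, let A ⊆ V be an affine subspace, and for r ∈ F₃ set n_r(A) = #{x ∈ A : q(x) = r}. Then for each r ∈ F₃, either dim A ≤ 2 and n_r(A) ≤ 5, or n_r(A) ≡ 0 (mod 3). -/
/-!
Parametrise `A` by `𝔽₃ⁿ`, `n = dim A`. Then `x ↦ q x - r` becomes a polynomial of total degree
at most `2` in `n` variables, so for `n ≥ 3` Chevalley–Warning makes the number of its
zeros divisible by `3`. For `n ≤ 1` there are at most `3` points, and for `n = 2` the zero count of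
a conic over `𝔽₃` is checked by enumerating all `3⁶` of them: it is never `7` or `8`.
-/

open MvPolynomial QuadraticMap

section PolynomialFunctions

variable {R ι : Type*} [CommRing R] [Fintype ι]

theorem LinearMap.exists_isHomogeneous_one_eval_eq (ℓ : (ι → R) →ₗ[R] R) :
    ∃ f : MvPolynomial ι R, f.IsHomogeneous 1 ∧ ∀ c, eval c f = ℓ c := by
  classical
  refine ⟨∑ i, C (ℓ (Pi.single i 1)) * X i,
    IsHomogeneous.sum _ _ _ fun i _ => isHomogeneous_C_mul_X _ i, fun c => ?_⟩
  conv_rhs => rw [pi_eq_sum_univ' c]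
  simp [mul_comm]

theorem QuadraticMap.exists_isHomogeneous_two_eval_eq (Q : QuadraticMap R (ι → R) R) :
    ∃ f : MvPolynomial ι R, f.IsHomogeneous 2 ∧ ∀ c, eval c f = Q c := by
  classical
  obtain ⟨B, rfl⟩ := LinearMap.BilinMap.toQuadraticMap_surjective Q
  let M := LinearMap.toMatrix₂' R B
  refine ⟨∑ i, X i * M.toMvPolynomial i, IsHomogeneous.sum _ _ _ fun i _ =>
    (isHomogeneous_X R i).mul (M.toMvPolynomial_isHomogeneous i), fun c => ?_⟩
  rw [LinearMap.BilinMap.toQuadraticMap_apply, ← Matrix.toLinearMap₂'_toMatrix' (R := R) B,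
    Matrix.toLinearMap₂'_apply']
  simp [M, Matrix.toMvPolynomial_eval_eq_apply, dotProduct]

theorem QuadraticMap.exists_totalDegree_le_two_eval_eq_apply_add {V : Type*}
    [AddCommGroup V] [Module R V] (q : QuadraticMap R V R) (v₀ : V) (L : (ι → R) →ₗ[R] V) :
    ∃ f : MvPolynomial ι R, f.totalDegree ≤ 2 ∧ ∀ c, eval c f = q (v₀ + L c) := by
  obtain ⟨f₁, hf₁, hf₁c⟩ := ((polarBilin q v₀).comp L).exists_isHomogeneous_one_eval_eq
  obtain ⟨f₂, hf₂, hf₂c⟩ := (q.comp L).exists_isHomogeneous_two_eval_eq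
  refine ⟨C (q v₀) + f₁ + f₂, ?_, fun c => ?_⟩
  · grw [totalDegree_add, totalDegree_add, totalDegree_C, hf₁.totalDegree_le,
      hf₂.totalDegree_le]
    simp
  · rw [QuadraticMap.map_add q]
    simp [hf₁c, hf₂c]
    ring

end PolynomialFunctions

theorem QuadraticMap.char_dvd_ncard_setOf_apply_add_eq {K V ι : Type*} [Field K] [Fintype K]
    (p : ℕ) [CharP K p] [AddCommGroup V] [Module K V] [Fintype ι] (q : QuadraticMap K V K)
    (v₀ : V) (L : (ι → K) →ₗ[K] V) (r : K) (hι : 2 < Fintype.card ι) :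
    p ∣ {c : ι → K | q (v₀ + L c) = r}.ncard := by
  classical
  obtain ⟨f, hf, hfc⟩ := q.exists_totalDegree_le_two_eval_eq_apply_add v₀ L
  have := char_dvd_card_solutions p (f := f - C r)
    ((totalDegree_sub_C_le _ _).trans_lt (hf.trans_lt hι))
  simpa [Set.ncard_eq_toFinset_card', Fintype.card_subtype, hfc, sub_eq_zero] using this

theorem QuadraticMap.apply_add_smul_add_smul {R V : Type*} [CommRing R] [AddCommGroup V]
    [Module R V] (q : QuadraticMap R V R) (v u w : V) (s t : R) :
    q (v + s • u + t • w) = q u * s ^ 2 + polar q u w * s * t + q w * t ^ 2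
      + polar q v u * s + polar q v w * t + q v := by
  rw [add_assoc, QuadraticMap.map_add q, QuadraticMap.map_add q, polar_add_right,
    QuadraticMap.map_smul, QuadraticMap.map_smul, polar_smul_left, polar_smul_right,
    polar_smul_right, polar_smul_right]
  simp only [smul_eq_mul]
  ring

theorem ZMod.card_filter_quadratic_le_five_or_three_dvd (a b c d e f : ZMod 3) :
    (Finset.univ.filter fun x : ZMod 3 × ZMod 3 =>
        a * x.1 ^ 2 + b * x.1 * x.2 + c * x.2 ^ 2 + d * x.1 + e * x.2 + f = 0).card ≤ 5 ∨
      3 ∣ (Finset.univ.filter fun x : ZMod 3 × ZMod 3 =>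
        a * x.1 ^ 2 + b * x.1 * x.2 + c * x.2 ^ 2 + d * x.1 + e * x.2 + f = 0).card := by
  revert a b c d e f
  decide

theorem QuadraticMap.ncard_setOf_apply_add_eq_le_five_or_three_dvd {V : Type*} [AddCommGroup V]
    [Module (ZMod 3) V] (q : QuadraticMap (ZMod 3) V (ZMod 3)) (v₀ : V)
    (L : ZMod 3 × ZMod 3 →ₗ[ZMod 3] V) (r : ZMod 3) :
    {x | q (v₀ + L x) = r}.ncard ≤ 5 ∨ 3 ∣ {x | q (v₀ + L x) = r}.ncard := by
  classical
  have hL (x : ZMod 3 × ZMod 3) : L x = x.1 • L (1, 0) + x.2 • L (0, 1) := by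
    rw [← map_smul, ← map_smul, ← map_add]
    congr 1
    ext <;> simp
  have hset : {x | q (v₀ + L x) = r} = ↑(Finset.univ.filter fun x : ZMod 3 × ZMod 3 =>
      q (L (1, 0)) * x.1 ^ 2 + polar q (L (1, 0)) (L (0, 1)) * x.1 * x.2
        + q (L (0, 1)) * x.2 ^ 2 + polar q v₀ (L (1, 0)) * x.1 + polar q v₀ (L (0, 1)) * x.2
        + (q v₀ - r) = 0) := by
    ext x
    rw [Set.mem_ofPred_eq, Finset.coe_filter, Set.mem_ofPred_eq, hL, ← add_assoc,
      q.apply_add_smul_add_smul, ← add_sub_assoc, sub_eq_zero]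
    simp
  rw [hset, Set.ncard_coe_finset]
  exact ZMod.card_filter_quadratic_le_five_or_three_dvd _ _ _ _ _ _

theorem AffineSubspace.ncard_setOf_mem_and_eq {k V W : Type*} [Ring k] [AddCommGroup V]
    [Module k V] [AddCommGroup W] [Module k W] (A : AffineSubspace k V) {p : V} (hp : p ∈ A)
    (e : W ≃ₗ[k] A.direction) (P : V → Prop) :
    {x | x ∈ A ∧ P x}.ncard = {w | P (p + e w)}.ncard := by
  have hinj : Function.Injective fun w => p + (e w : V) :=
    fun w w' h => e.injective (Subtype.ext (add_left_cancel h))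
  rw [← Set.ncard_image_of_injective _ hinj]
  congr 1
  ext x
  constructor
  · rintro ⟨hx, hPx⟩
    refine ⟨e.symm ⟨x - p, A.vsub_mem_direction hx hp⟩, ?_, ?_⟩ <;> simp [hPx]
  · rintro ⟨w, hw, rfl⟩
    refine ⟨?_, hw⟩
    show p + (e w : V) ∈ A
    rw [add_comm]
    exact A.vadd_mem_of_mem_direction (e w).2 hp

/-- for a quadratic form `q` on an `𝔽₃`-vector space and an affine
subspace `A`, the number `n_r(A)` of points of `A` on which `q` takes the value `r`
satisfies: either `dim A ≤ 2` and `n_r(A) ≤ 5`, or `n_r(A) ≡ 0 (mod 3)`. -/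
theorem count_in_affine_subspace {V : Type*} [AddCommGroup V] [Module (ZMod 3) V]
    [Fintype V] (q : QuadraticForm (ZMod 3) V) (A : AffineSubspace (ZMod 3) V)
    (r : ZMod 3) :
    (Module.finrank (ZMod 3) A.direction ≤ 2 ∧
      {x : V | x ∈ A ∧ q x = r}.ncard ≤ 5) ∨
    3 ∣ {x : V | x ∈ A ∧ q x = r}.ncard := by
  rcases (A : Set V).eq_empty_or_nonempty with hA | ⟨p, hp⟩
  · right
    simp [← SetLike.mem_coe, hA]
  generalize hn : Module.finrank (ZMod 3) A.direction = n
  rcases lt_trichotomy n 2 with hlt | h2 | hgt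
  · let e := LinearEquiv.ofFinrankEq (Fin n → ZMod 3) A.direction (by rw [hn]; simp)
    refine .inl ⟨hlt.le, ?_⟩
    rw [A.ncard_setOf_mem_and_eq hp e]
    calc _ ≤ Nat.card (Fin n → ZMod 3) := Set.ncard_le_card _
      _ = 3 ^ n := by simp
      _ ≤ 5 := by interval_cases n <;> norm_num
  · let e := LinearEquiv.ofFinrankEq (ZMod 3 × ZMod 3) A.direction (by rw [hn, h2]; simp)
    rw [A.ncard_setOf_mem_and_eq hp e]
    exact (q.ncard_setOf_apply_add_eq_le_five_or_three_dvd p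
      (A.direction.subtype ∘ₗ e.toLinearMap) r).imp_left (⟨h2.le, ·⟩)
  · let e := LinearEquiv.ofFinrankEq (Fin n → ZMod 3) A.direction (by rw [hn]; simp)
    rw [A.ncard_setOf_mem_and_eq hp e]
    exact .inr <| q.char_dvd_ncard_setOf_apply_add_eq 3 p (A.direction.subtype ∘ₗ e.toLinearMap)
      r (by simpa using hgt)
end

section
/- Let q be a nondegenerate finite quadratic form on a finite abelian group L, and let K ⊆ L be an isotropic subgroup (q vanishes on K). Then the Brown invariant of the induced quadratic form on K^⊥/K equals the Brown invariant of q: Br(K^⊥/K) = Br(L). -/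
open scoped BigOperators

/-- The character `ℚ/2ℤ → ℂ`, `r ↦ exp(iπr)`. -/
noncomputable def e2 : AddCircle (2 : ℚ) → ℂ := fun x =>
  Quotient.liftOn' x (fun r : ℚ => Complex.exp (Real.pi * Complex.I * (r : ℂ))) (by
    intro a b hab
    obtain ⟨n, hn⟩ := QuotientAddGroup.leftRel_apply.mp hab
    have hn' : (n : ℚ) * 2 = -a + b := by simpa [zsmul_eq_mul] using hn
    have hb : (b : ℚ) = a + 2 * n := by linarith
    simp only [hb]
    push_cast
    rw [mul_add, Complex.exp_add]
    have h1 : (Real.pi : ℂ) * Complex.I * (2 * (n : ℂ)) =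
        (n : ℂ) * (2 * Real.pi * Complex.I) := by ring
    rw [h1, Complex.exp_int_mul_two_pi_mul_I, mul_one])

/-- The natural isomorphism `2 : ℚ/ℤ → ℚ/2ℤ`. -/
def dbl : AddCircle (1 : ℚ) → AddCircle (2 : ℚ) := fun x =>
  Quotient.liftOn' x (fun r : ℚ => ((2 * r : ℚ) : AddCircle (2 : ℚ))) (by
    intro a b hab
    obtain ⟨n, hn⟩ := QuotientAddGroup.leftRel_apply.mp hab
    have hn' : (n : ℚ) * 1 = -a + b := by simpa [zsmul_eq_mul] using hn
    refine (QuotientAddGroup.eq).mpr ?_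
    refine AddSubgroup.mem_zmultiples_iff.mpr ⟨n, ?_⟩
    rw [zsmul_eq_mul]
    linarith)

noncomputable def e1 : AddCircle (1 : ℚ) → ℂ := fun x =>
  Quotient.liftOn' x (fun r : ℚ => Complex.exp (2 * Real.pi * Complex.I * (r : ℂ))) (by
    intro a b hab
    obtain ⟨n, hn⟩ := QuotientAddGroup.leftRel_apply.mp hab
    have hn' : (n : ℚ) * 1 = -a + b := by simpa [zsmul_eq_mul] using hn
    have hb : (b : ℚ) = a + n := by linarith
    simp only [hb]
    push_cast
    rw [mul_add, Complex.exp_add]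
    have h1 : 2 * (Real.pi : ℂ) * Complex.I * (n : ℂ) =
        (n : ℂ) * (2 * Real.pi * Complex.I) := by ring
    rw [h1, Complex.exp_int_mul_two_pi_mul_I, mul_one])

lemma e1_coe (r : ℚ) : e1 (r : AddCircle (1:ℚ)) = Complex.exp (2 * Real.pi * Complex.I * r) := rfl

lemma e2_coe (r : ℚ) : e2 (r : AddCircle (2:ℚ)) = Complex.exp (Real.pi * Complex.I * r) := rfl

lemma e1_add (x y : AddCircle (1:ℚ)) : e1 (x + y) = e1 x * e1 y := by
  induction x using Quotient.inductionOn'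
  induction y using Quotient.inductionOn'
  rename_i a c
  show e1 (((a + c : ℚ) : AddCircle (1:ℚ))) = _
  rw [e1_coe]
  show _ = Complex.exp _ * Complex.exp _
  rw [← Complex.exp_add]
  push_cast
  ring_nf

lemma e2_add (x y : AddCircle (2:ℚ)) : e2 (x + y) = e2 x * e2 y := by
  induction x using Quotient.inductionOn'
  induction y using Quotient.inductionOn'
  rename_i a c
  show e2 (((a + c : ℚ) : AddCircle (2:ℚ))) = _
  rw [e2_coe]
  show _ = Complex.exp _ * Complex.exp _
  rw [← Complex.exp_add]
  push_cast
  ring_nf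

lemma e1_zero : e1 (0 : AddCircle (1:ℚ)) = 1 := by
  have : ((0 : ℚ) : AddCircle (1:ℚ)) = 0 := by norm_cast
  rw [← this, e1_coe]
  simp

lemma e2_dbl (x : AddCircle (1:ℚ)) : e2 (dbl x) = e1 x := by
  induction x using Quotient.inductionOn'
  rename_i a
  show e2 (((2 * a : ℚ) : AddCircle (2:ℚ))) = _
  rw [e2_coe, e1_coe]
  congr 1
  push_cast
  ring

lemma e1_ne_one {x : AddCircle (1:ℚ)} (h : x ≠ 0) : e1 x ≠ 1 := by
  induction x using Quotient.inductionOn'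
  rename_i a
  intro hc
  rw [show (Quotient.mk'' a : AddCircle (1:ℚ)) = (a : AddCircle (1:ℚ)) from rfl, e1_coe] at hc
  obtain ⟨n, hn⟩ := Complex.exp_eq_one_iff.mp hc
  have h2 : (2 * Real.pi * Complex.I : ℂ) ≠ 0 := by
    exact mul_ne_zero (mul_ne_zero two_ne_zero
      (Complex.ofReal_ne_zero.mpr Real.pi_ne_zero)) Complex.I_ne_zero
  have han : (a : ℂ) = (n : ℂ) := by
    have : (a : ℂ) * (2 * Real.pi * Complex.I) = (n:ℂ) * (2 * Real.pi * Complex.I) := by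
      rw [← hn]; ring
    exact mul_right_cancel₀ h2 this
  have haq : (a : ℚ) = (n : ℚ) := by exact_mod_cast han
  apply h
  rw [show (Quotient.mk'' a : AddCircle (1:ℚ)) = (a : AddCircle (1:ℚ)) from rfl, haq]
  refine (QuotientAddGroup.eq_zero_iff _).mpr ?_
  exact AddSubgroup.mem_zmultiples_iff.mpr ⟨n, by simp⟩

lemma dbl_eq_zero {x : AddCircle (1:ℚ)} (h : dbl x = 0) : x = 0 := by
  induction x using Quotient.inductionOn'
  rename_i a
  have h' : ((2 * a : ℚ) : AddCircle (2:ℚ)) = 0 := h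
  rw [QuotientAddGroup.eq_zero_iff] at h'
  obtain ⟨n, hn⟩ := AddSubgroup.mem_zmultiples_iff.mp h'
  rw [zsmul_eq_mul] at hn
  show ((a : ℚ) : AddCircle (1:ℚ)) = 0
  rw [QuotientAddGroup.eq_zero_iff]
  refine AddSubgroup.mem_zmultiples_iff.mpr ⟨n, ?_⟩
  rw [zsmul_eq_mul]
  linarith

lemma sum_e1_eq_zero {A : Type*} [AddCommGroup A] [Fintype A] (φ : A →+ AddCircle (1:ℚ))
    (a0 : A) (h : φ a0 ≠ 0) : ∑ a : A, e1 (φ a) = 0 := by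
  have key : ∑ a : A, e1 (φ (a0 + a)) = ∑ a : A, e1 (φ a) :=
    Fintype.sum_equiv (Equiv.addLeft a0) _ _ (fun a => rfl)
  have key2 : ∑ a : A, e1 (φ (a0 + a)) = e1 (φ a0) * ∑ a : A, e1 (φ a) := by
    rw [Finset.mul_sum]
    refine Finset.sum_congr rfl fun a _ => ?_
    rw [map_add, e1_add]
  have : (e1 (φ a0) - 1) * ∑ a : A, e1 (φ a) = 0 := by
    rw [sub_mul, one_mul, ← key2, key, sub_self]
  rcases mul_eq_zero.mp this with h1 | h2
  · exact absurd (sub_eq_zero.mp h1) (e1_ne_one h)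
  · exact h2

/-- for a nondegenerate finite quadratic form `q` on `L` and an isotropic
subgroup `K ⊆ L`, the Brown invariant of the induced form on `K^⊥/K` equals the Brown
invariant of `q`; equivalently, the normalized Gauss sums (whose value `exp(iπ Br/4)`
defines the Brown invariant) coincide. -/
theorem brown_of_isotropic_quotient {L : Type*} [AddCommGroup L] [Fintype L]
    (q : L → AddCircle (2 : ℚ)) (b : L → L → AddCircle (1 : ℚ))
    (hbsymm : ∀ x y, b x y = b y x)
    (hbadd : ∀ x y z, b (x + y) z = b x z + b y z)
    (hqadd : ∀ x y, q (x + y) = q x + q y + dbl (b x y))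
    (hqsmul : ∀ (n : ℤ) (x : L), q (n • x) = (n ^ 2 : ℤ) • q x)
    (hnd : (∀ x, (∀ y, b x y = 0) → x = 0) ∧
      ∀ φ : L →+ AddCircle (1 : ℚ), ∃ x, ∀ y, φ y = b x y)
    (K : AddSubgroup L) (hK : ∀ x ∈ K, q x = 0)
    (Kp : AddSubgroup L) (hKp : ∀ x, x ∈ Kp ↔ ∀ y ∈ K, b x y = 0)
    [Fintype (Kp ⧸ K.addSubgroupOf Kp)]
    (q' : (Kp ⧸ K.addSubgroupOf Kp) → AddCircle (2 : ℚ))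
    (hq' : ∀ x : Kp, q' (QuotientAddGroup.mk x) = q (x : L)) :
    ((Real.sqrt (Fintype.card (Kp ⧸ K.addSubgroupOf Kp)) : ℂ))⁻¹ *
        ∑ y : Kp ⧸ K.addSubgroupOf Kp, e2 (q' y) =
      ((Real.sqrt (Fintype.card L) : ℂ))⁻¹ * ∑ x : L, e2 (q x) := by
  classical
  -- basic facts about b
  have hb0 : ∀ x : L, b 0 x = 0 := by
    intro x
    have h := hbadd 0 0 x
    rw [add_zero] at h
    exact (add_left_cancel (a := b 0 x) (by rw [add_zero, ← h])).symm
  have hb0' : ∀ x : L, b x 0 = 0 := fun x => by rw [hbsymm]; exact hb0 x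
  -- K ≤ Kp
  have hKle : K ≤ Kp := by
    intro x hx
    rw [hKp]
    intro y hy
    have h1 : q (x + y) = q x + q y + dbl (b x y) := hqadd x y
    rw [hK _ hx, hK _ hy, hK _ (K.add_mem hx hy), zero_add, zero_add] at h1
    exact dbl_eq_zero h1.symm
  -- character sum over K
  have hchar : ∀ x : L, ∑ k : K, e1 (b x (k : L)) =
      (if x ∈ Kp then (Fintype.card K : ℂ) else 0) := by
    intro x
    by_cases hx : x ∈ Kp
    · rw [if_pos hx]
      calc ∑ k : K, e1 (b x (k : L)) = ∑ _k : K, (1 : ℂ) := by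
            refine Finset.sum_congr rfl fun k _ => ?_
            rw [(hKp x).mp hx _ k.2, e1_zero]
        _ = (Fintype.card K : ℂ) := by simp
    · rw [if_neg hx]
      have hne : ¬ ∀ y ∈ K, b x y = 0 := fun h => hx ((hKp x).mpr h)
      push_neg at hne
      obtain ⟨y, hyK, hyne⟩ := hne
      have hsum := sum_e1_eq_zero (AddMonoidHom.mk' (fun k : K => b x (k : L))
        (fun k k' => by
          show b x ((k : L) + (k' : L)) = b x (k : L) + b x (k' : L)
          rw [hbsymm, hbadd, hbsymm (k : L), hbsymm (k' : L)]))
        ⟨y, hyK⟩ (by simpa using hyne)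
      simpa using hsum
  -- Step A
  have stepA : ∑ x : L, e2 (q x) = ∑ x : Kp, e2 (q (x : L)) := by
    have hinner : ∀ x : L, ∑ k : K, e2 (q (x + (k : L))) =
        (if x ∈ Kp then (Fintype.card K : ℂ) else 0) * e2 (q x) := by
      intro x
      have h1 : ∀ k : K, e2 (q (x + (k : L))) = e2 (q x) * e1 (b x (k : L)) := by
        intro k
        rw [hqadd, hK _ k.2, add_zero, e2_add, e2_dbl]
      rw [Finset.sum_congr rfl (fun k _ => h1 k), ← Finset.mul_sum, hchar, mul_comm]
    have swap : ∑ k : K, ∑ x : L, e2 (q (x + (k : L))) =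
        ∑ x : L, ∑ k : K, e2 (q (x + (k : L))) := Finset.sum_comm
    have lhs : ∑ k : K, ∑ x : L, e2 (q (x + (k : L))) =
        (Fintype.card K : ℂ) * ∑ x : L, e2 (q x) := by
      have h2 : ∀ k : K, ∑ x : L, e2 (q (x + (k : L))) = ∑ x : L, e2 (q x) := fun k =>
        Fintype.sum_equiv (Equiv.addRight (k : L)) _ _ (fun x => rfl)
      rw [Finset.sum_congr rfl (fun k _ => h2 k), Finset.sum_const, Finset.card_univ,
        nsmul_eq_mul]
    have rhs : ∑ x : L, (if x ∈ Kp then (Fintype.card K : ℂ) else 0) * e2 (q x) =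
        (Fintype.card K : ℂ) * ∑ x : Kp, e2 (q (x : L)) := by
      calc ∑ x : L, (if x ∈ Kp then (Fintype.card K : ℂ) else 0) * e2 (q x)
          = ∑ x : L, (if x ∈ Kp then (Fintype.card K : ℂ) * e2 (q x) else 0) := by
            refine Finset.sum_congr rfl fun x _ => ?_
            split <;> simp
        _ = ∑ x ∈ Finset.univ.filter (· ∈ Kp), (Fintype.card K : ℂ) * e2 (q x) :=
            (Finset.sum_filter _ _).symm
        _ = ∑ x : Kp, (Fintype.card K : ℂ) * e2 (q (x : L)) :=
            Finset.sum_subtype _ (by simp) _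
        _ = (Fintype.card K : ℂ) * ∑ x : Kp, e2 (q (x : L)) := by rw [Finset.mul_sum]
    have key : (Fintype.card K : ℂ) * ∑ x : L, e2 (q x) =
        (Fintype.card K : ℂ) * ∑ x : Kp, e2 (q (x : L)) := by
      rw [← lhs, swap, Finset.sum_congr rfl (fun x _ => hinner x), rhs]
    have hcK : (Fintype.card K : ℂ) ≠ 0 := Nat.cast_ne_zero.mpr Fintype.card_pos.ne'
    exact mul_left_cancel₀ hcK key
  -- Step B
  have stepB : ∑ x : Kp, e2 (q (x : L)) =
      (Fintype.card (K.addSubgroupOf Kp) : ℂ) * ∑ y : Kp ⧸ (K.addSubgroupOf Kp), e2 (q' y) := by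
    rw [← Fintype.sum_fiberwise (QuotientAddGroup.mk : Kp → Kp ⧸ (K.addSubgroupOf Kp))
      (fun x : Kp => e2 (q (x : L))), Finset.mul_sum]
    refine Finset.sum_congr rfl fun y _ => ?_
    obtain ⟨x0, hx0⟩ := QuotientAddGroup.mk_surjective y
    have e : (K.addSubgroupOf Kp) ≃ {x : Kp // QuotientAddGroup.mk x = y} :=
      { toFun := fun k => ⟨x0 + k, by
          rw [← hx0]
          refine (QuotientAddGroup.eq).mpr ?_
          have h : -(x0 + (k : Kp)) + x0 = -(k : Kp) := by abel
          rw [h]; exact (K.addSubgroupOf Kp).neg_mem k.2⟩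
        invFun := fun x => ⟨-x0 + x, (QuotientAddGroup.eq).mp (hx0.trans x.2.symm)⟩
        left_inv := fun k => Subtype.ext (neg_add_cancel_left x0 k)
        right_inv := fun x => Subtype.ext (add_neg_cancel_left x0 x) }
    calc ∑ x : {x : Kp // QuotientAddGroup.mk x = y}, e2 (q ((x : Kp) : L))
        = ∑ _x : {x : Kp // QuotientAddGroup.mk x = y}, e2 (q' y) := by
          refine Finset.sum_congr rfl fun x _ => ?_
          have h := hq' (x : Kp)
          rw [x.2] at h
          rw [h]
      _ = (Fintype.card {x : Kp // QuotientAddGroup.mk x = y} : ℂ) * e2 (q' y) := by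
          rw [Finset.sum_const, Finset.card_univ, nsmul_eq_mul]
      _ = (Fintype.card (K.addSubgroupOf Kp) : ℂ) * e2 (q' y) := by rw [Fintype.card_congr e.symm]
  -- Step C : cardinality count
  have hcardKL : (Fintype.card Kp : ℂ) * (Fintype.card K : ℂ) = (Fintype.card L : ℂ) := by
    have swap : ∑ x : L, ∑ k : K, e1 (b x (k : L)) =
        ∑ k : K, ∑ x : L, e1 (b x (k : L)) := Finset.sum_comm
    have lhs : ∑ x : L, ∑ k : K, e1 (b x (k : L)) =
        (Fintype.card Kp : ℂ) * (Fintype.card K : ℂ) := by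
      calc ∑ x : L, ∑ k : K, e1 (b x (k : L))
          = ∑ x : L, (if x ∈ Kp then (Fintype.card K : ℂ) else 0) :=
            Finset.sum_congr rfl (fun x _ => hchar x)
        _ = ∑ _x ∈ Finset.univ.filter (· ∈ Kp), (Fintype.card K : ℂ) :=
            (Finset.sum_filter _ _).symm
        _ = ∑ _x : Kp, (Fintype.card K : ℂ) := Finset.sum_subtype _ (by simp) _
        _ = (Fintype.card Kp : ℂ) * (Fintype.card K : ℂ) := by
            rw [Finset.sum_const, Finset.card_univ, nsmul_eq_mul]
    have rhs : ∑ k : K, ∑ x : L, e1 (b x (k : L)) = (Fintype.card L : ℂ) := by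
      have hval : ∀ k : K, ∑ x : L, e1 (b x (k : L)) =
          if k = (0 : K) then (Fintype.card L : ℂ) else 0 := by
        intro k
        by_cases hk : k = 0
        · subst hk
          rw [if_pos rfl]
          calc ∑ x : L, e1 (b x ((0 : K) : L)) = ∑ _x : L, (1 : ℂ) := by
                refine Finset.sum_congr rfl fun x _ => ?_
                rw [show ((0 : K) : L) = 0 from rfl, hb0' x, e1_zero]
            _ = (Fintype.card L : ℂ) := by simp
        · rw [if_neg hk]
          have hkL : (k : L) ≠ 0 := fun h => hk (Subtype.ext h)
          have hex : ∃ y, b (k : L) y ≠ 0 := by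
            by_contra hall
            push_neg at hall
            exact hkL (hnd.1 _ hall)
          obtain ⟨y, hy⟩ := hex
          have hsum := sum_e1_eq_zero (AddMonoidHom.mk' (fun x : L => b x (k : L))
            (fun a c => hbadd a c _)) y (by simpa [hbsymm y] using hy)
          simpa using hsum
      rw [Finset.sum_congr rfl (fun k _ => hval k), Finset.sum_ite_eq' Finset.univ (0 : K)]
      simp
    rw [← lhs, swap, rhs]
  -- relating cardinalities
  have hKK : Fintype.card (K.addSubgroupOf Kp) = Fintype.card K :=
    Fintype.card_congr (AddSubgroup.addSubgroupOfEquivOfLe hKle).toEquiv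
  have hKpQ : Fintype.card Kp = Fintype.card (Kp ⧸ (K.addSubgroupOf Kp)) * Fintype.card (K.addSubgroupOf Kp) := by
    have h := AddSubgroup.card_eq_card_quotient_mul_card_addSubgroup ((K.addSubgroupOf Kp) : AddSubgroup Kp)
    simpa [Nat.card_eq_fintype_card] using h
  have hcardL : Fintype.card L =
      Fintype.card K ^ 2 * Fintype.card (Kp ⧸ (K.addSubgroupOf Kp)) := by
    have h1 : Fintype.card Kp * Fintype.card K = Fintype.card L := by exact_mod_cast hcardKL
    rw [← h1, hKpQ, hKK]; ring
  -- final assembly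
  have hSL : ∑ x : L, e2 (q x) = (Fintype.card K : ℂ) * ∑ y : Kp ⧸ (K.addSubgroupOf Kp), e2 (q' y) := by
    rw [stepA, stepB, hKK]
  have hcK0 : (0 : ℝ) < Fintype.card K := by exact_mod_cast Fintype.card_pos
  have hnQ0 : (0 : ℝ) < Fintype.card (Kp ⧸ (K.addSubgroupOf Kp)) := by exact_mod_cast Fintype.card_pos
  have hsqrt : Real.sqrt (Fintype.card L) =
      (Fintype.card K : ℝ) * Real.sqrt (Fintype.card (Kp ⧸ (K.addSubgroupOf Kp))) := by
    rw [hcardL]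
    push_cast
    rw [Real.sqrt_mul (by positivity), Real.sqrt_sq (by positivity)]
  rw [hSL, hsqrt]
  have h1 : ((Fintype.card K : ℝ) : ℂ) ≠ 0 := by
    exact_mod_cast ne_of_gt hcK0
  have h2 : ((Real.sqrt (Fintype.card (Kp ⧸ (K.addSubgroupOf Kp))) : ℝ) : ℂ) ≠ 0 := by
    have : (0:ℝ) < Real.sqrt (Fintype.card (Kp ⧸ (K.addSubgroupOf Kp))) := Real.sqrt_pos.mpr hnQ0
    exact_mod_cast ne_of_gt this
  push_cast
  field_simp
end

section
/- Any nondegenerate symmetric bilinear form on an F₂-vector space of even dimension is null-cobordant, i.e., admits an isotropic subspace of half the dimension. -/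
/-!
Take a maximal isotropic subspace `K`, so that `K ≤ Kᗮ`. Over `𝔽₂` the diagonal `x ↦ B x x` of a
symmetric form is linear, and a vector of `Kᗮ` in its kernel lies in `K`, since adjoining it keeps
`K` isotropic. Hence `dim Kᗮ ≤ dim K + 1`, while nondegeneracy gives `dim K + dim Kᗮ = dim V`;
as `dim V` is even, `dim Kᗮ = dim K`.
-/

open Module Submodule

theorem Submodule.finrank_le_finrank_inf_ker_add_one {K V : Type*} [Field K] [AddCommGroup V]
    [Module K V] [FiniteDimensional K V] (W : Submodule K V) (f : V →ₗ[K] K) :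
    finrank K W ≤ finrank K ↥(W ⊓ LinearMap.ker f) + 1 := by
  have hrange : finrank K (LinearMap.range (f.domRestrict W)) ≤ 1 :=
    (Submodule.finrank_le _).trans (Module.finrank_self K).le
  have hker : finrank K (LinearMap.ker (f.domRestrict W)) = finrank K ↥(W ⊓ LinearMap.ker f) := by
    rw [LinearMap.ker_domRestrict, ← map_comap_subtype, finrank_map_subtype_eq]
  have := LinearMap.finrank_range_add_finrank_ker (f.domRestrict W)
  omega

namespace LinearMap.BilinForm

section CommRing

variable {R V : Type*} [CommRing R] [AddCommGroup V] [Module R V] {B : LinearMap.BilinForm R V}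

theorem sup_span_singleton_le_orthogonal (hB : ∀ x y, B x y = B y x) {K : Submodule R V}
    (hK : K ≤ B.orthogonal K) {x : V} (hx : x ∈ B.orthogonal K) (hxx : B x x = 0) :
    K ⊔ span R {x} ≤ B.orthogonal (K ⊔ span R {x}) := by
  rintro y hy z hz
  obtain ⟨k, hk, _, ha, rfl⟩ := mem_sup.1 hy
  obtain ⟨l, hl, _, hb, rfl⟩ := mem_sup.1 hz
  obtain ⟨a, rfl⟩ := mem_span_singleton.1 ha
  obtain ⟨b, rfl⟩ := mem_span_singleton.1 hb
  have hlk : B l k = 0 := hK hk l hl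
  have hlx : B l x = 0 := hx l hl
  have hxk : B x k = 0 := hB x k ▸ hx k hk
  simp [hlk, hlx, hxk, hxx]

theorem mem_of_maximal_le_orthogonal (hB : ∀ x y, B x y = B y x) {K : Submodule R V}
    (hK : Maximal (fun W => W ≤ B.orthogonal W) K) {x : V} (hx : x ∈ B.orthogonal K)
    (hxx : B x x = 0) : x ∈ K :=
  (hK.eq_of_le (sup_span_singleton_le_orthogonal hB hK.prop hx hxx) le_sup_left).symm ▸
    mem_sup_right (mem_span_singleton_self x)

end CommRing

section ZMod2

variable {V : Type*} [AddCommGroup V] [Module (ZMod 2) V]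

def diagLinearForm (B : LinearMap.BilinForm (ZMod 2) V) (hB : ∀ x y, B x y = B y x) :
    V →ₗ[ZMod 2] ZMod 2 where
  toFun x := B x x
  map_add' x y := by
    simp only [map_add, LinearMap.add_apply, hB y x]
    linear_combination CharTwo.add_self_eq_zero (B x y)
  map_smul' c x := by
    simp only [map_smul, LinearMap.smul_apply, smul_eq_mul, RingHom.id_apply]
    rw [← mul_assoc, ← sq, ZMod.pow_card]

theorem finrank_orthogonal_le_of_maximal [FiniteDimensional (ZMod 2) V]
    {B : LinearMap.BilinForm (ZMod 2) V}
    (hB : ∀ x y, B x y = B y x) {K : Submodule (ZMod 2) V}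
    (hK : Maximal (fun W => W ≤ B.orthogonal W) K) :
    finrank (ZMod 2) (B.orthogonal K) ≤ finrank (ZMod 2) K + 1 :=
  calc finrank (ZMod 2) (B.orthogonal K)
      ≤ finrank (ZMod 2) ↥(B.orthogonal K ⊓ LinearMap.ker (diagLinearForm B hB)) + 1 :=
        (B.orthogonal K).finrank_le_finrank_inf_ker_add_one _
    _ ≤ finrank (ZMod 2) K + 1 := by
        gcongr
        exact Submodule.finrank_mono fun _ ⟨hx, hxx⟩ => mem_of_maximal_le_orthogonal hB hK hx hxx

end ZMod2

end LinearMap.BilinForm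

open LinearMap.BilinForm

/-- any nondegenerate symmetric bilinear form on an `𝔽₂`-vector space of
even dimension is null-cobordant: it admits an isotropic subspace of half the
dimension. -/
theorem f2_bilinear_null_cobordant {V : Type*} [AddCommGroup V] [Module (ZMod 2) V]
    [FiniteDimensional (ZMod 2) V]
    (B : V →ₗ[ZMod 2] V →ₗ[ZMod 2] ZMod 2)
    (hsymm : ∀ x y, B x y = B y x)
    (hnd : Function.Bijective fun v => B v)
    (heven : Even (Module.finrank (ZMod 2) V)) :
    ∃ K : Submodule (ZMod 2) V, (∀ x ∈ K, ∀ y ∈ K, B x y = 0) ∧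
      2 * Module.finrank (ZMod 2) K = Module.finrank (ZMod 2) V := by
  have := Module.finite_of_finite (ZMod 2) (M := V)
  obtain ⟨K, -, hK⟩ :=
    Finite.exists_le_maximal (p := fun K : Submodule (ZMod 2) V => K ≤ orthogonal B K) bot_le
  have hdim : finrank (ZMod 2) K + finrank (ZMod 2) (orthogonal B K) = finrank (ZMod 2) V := by
    have := finrank_add_finrank_orthogonal' (B := B) K
    rwa [LinearMap.ker_eq_bot_of_injective hnd.injective, inf_bot_eq, finrank_bot, add_zero] at this
  have hlower : finrank (ZMod 2) K ≤ finrank (ZMod 2) (orthogonal B K) :=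
    Submodule.finrank_mono hK.prop
  have hupper := finrank_orthogonal_le_of_maximal hsymm hK
  obtain ⟨r, hr⟩ := heven
  exact ⟨K, fun x hx y hy => hK.prop hy x hx, by omega⟩
end
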